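/- arXiv:2012.11340 — 5 statements merged into one kernel-verified Lean document; each statement's English description precedes it below -/
import Mathlib

section
/- Let U, V, W ⊆ ℝ^d be subspaces with dim U = dim V = dim W = k ≥ 1. Then the largest principal angle satisfies the triangle inequality ∠(U,W) ≤ ∠(U,V) + ∠(V,W); together with symmetry and definiteness this makes ∠ a metric on the Grassmannian 𝒢(k,d) of k-dimensional subspaces of ℝ^d. -/
open Filter

noncomputable section

abbrev Euc (d : ℕ) := EuclideanSpace ℝ (Fin d)

/-- Angle between the lines spanned by two vectors. -/
noncomputable def vecAngle {d : ℕ} (v w : Euc d) : ℝ :=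
  Real.arccos (|(inner ℝ v w : ℝ)| / (‖v‖ * ‖w‖))

/-- Largest principal angle between two subspaces of equal dimension. -/
noncomputable def subAngle {d : ℕ} (V W : Submodule ℝ (Euc d)) : ℝ :=
  Real.arccos (sInf {c : ℝ | ∃ v ∈ V, ‖v‖ = 1 ∧
    c = sSup {r : ℝ | ∃ w ∈ W, ‖w‖ = 1 ∧ r = (inner ℝ v w : ℝ)}})

/-!
The best unit approximation in `W` of a unit vector `v` is `P_W v / ‖P_W v‖`, so
`cos ∠(V,W)` is the smallest value of `‖P_W v‖` over unit vectors `v ∈ V`.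
For the triangle inequality, follow a worst unit vector `u ∈ U` to its best approximation
`v ∈ V` and then `v` to its best approximation `w ∈ W`: the spherical triangle inequality
bounds the angle between `u` and `w`, and `w` is no better than the best approximation of `u`.
Symmetry holds because the restricted projections `V → W` and `W → V` are adjoint to each
other, and in equal finite dimension a linear map and its adjoint share their lower bounds
`c ‖x‖ ≤ ‖A x‖`.
-/

open Real InnerProductGeometry Module
open scoped InnerProductSpace

section

variable {E F : Type*} [NormedAddCommGroup E] [InnerProductSpace ℝ E]
  [NormedAddCommGroup F] [InnerProductSpace ℝ F]

theorem ContinuousLinearMap.mul_norm_le_norm_adjoint_apply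
    [FiniteDimensional ℝ E] [FiniteDimensional ℝ F] (hEF : finrank ℝ E = finrank ℝ F)
    {A : E →L[ℝ] F} {c : ℝ} (hA : ∀ x, c * ‖x‖ ≤ ‖A x‖) (y : F) :
    c * ‖y‖ ≤ ‖adjoint A y‖ := by
  rcases le_or_gt c 0 with hc | hc
  · exact (mul_nonpos_of_nonpos_of_nonneg hc (norm_nonneg y)).trans (norm_nonneg _)
  have hinj : Function.Injective (A : E →ₗ[ℝ] F) := by
    refine (injective_iff_map_eq_zero _).2 fun x hx => norm_eq_zero.1 ?_
    have hcx : c * ‖x‖ ≤ 0 := by simpa [← ContinuousLinearMap.coe_coe, hx] using hA x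
    nlinarith [norm_nonneg x]
  obtain ⟨x, rfl⟩ := (LinearMap.injective_iff_surjective_of_finrank_eq_finrank hEF).1 hinj y
  rw [ContinuousLinearMap.coe_coe]
  rcases eq_or_ne x 0 with rfl | hx
  · simp
  refine le_of_mul_le_mul_right ?_ (norm_pos_iff.2 hx)
  calc c * ‖A x‖ * ‖x‖ = ‖A x‖ * (c * ‖x‖) := by ring
    _ ≤ ‖A x‖ * ‖A x‖ := by gcongr; exact hA x
    _ = ⟪adjoint A (A x), x⟫_ℝ := by
      rw [ContinuousLinearMap.adjoint_inner_left, real_inner_self_eq_norm_mul_norm]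
    _ ≤ ‖adjoint A (A x)‖ * ‖x‖ := real_inner_le_norm _ _

namespace Submodule

variable (K : Submodule ℝ E)

theorem exists_mem_norm_eq_one (hK : K ≠ ⊥) : ∃ v ∈ K, ‖v‖ = 1 := by
  have := (nontrivial_iff_ne_bot (p := K)).2 hK
  obtain ⟨v, hv⟩ := exists_norm_eq K zero_le_one
  exact ⟨v, v.2, hv⟩

variable [K.HasOrthogonalProjection]

theorem isGreatest_inner_norm_eq_one (hK : K ≠ ⊥) (v : E) :
    IsGreatest {r : ℝ | ∃ w ∈ K, ‖w‖ = 1 ∧ r = ⟪v, w⟫_ℝ} ‖K.starProjection v‖ := by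
  have inner_eq {w : E} (hw : w ∈ K) : ⟪v, w⟫_ℝ = ⟪K.starProjection v, w⟫_ℝ := by
    rw [inner_starProjection_left_eq_right, starProjection_eq_self_iff.2 hw]
  refine ⟨?_, ?_⟩
  · rcases eq_or_ne (K.starProjection v) 0 with h0 | h0
    · obtain ⟨w, hw, hw1⟩ := K.exists_mem_norm_eq_one hK
      exact ⟨w, hw, hw1, by rw [inner_eq hw, h0, inner_zero_left, norm_zero]⟩
    · refine ⟨‖K.starProjection v‖⁻¹ • K.starProjection v,
        K.smul_mem _ (K.starProjection_apply_mem v), norm_smul_inv_norm h0, ?_⟩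
      rw [inner_eq (K.smul_mem _ (K.starProjection_apply_mem v)), real_inner_smul_right,
        real_inner_self_eq_norm_sq]
      field_simp [norm_ne_zero_iff.2 h0]
  · rintro r ⟨w, hw, hw1, rfl⟩
    simpa [inner_eq hw, hw1] using real_inner_le_norm (K.starProjection v) w

theorem sSup_inner_norm_eq_one (v : E) :
    sSup {r : ℝ | ∃ w ∈ K, ‖w‖ = 1 ∧ r = ⟪v, w⟫_ℝ} = ‖K.starProjection v‖ := by
  rcases eq_or_ne K ⊥ with rfl | hK
  · simp
  · exact (K.isGreatest_inner_norm_eq_one hK v).csSup_eq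

end Submodule

def minProjNorm (V W : Submodule ℝ E) [W.HasOrthogonalProjection] : ℝ :=
  sInf {c : ℝ | ∃ v ∈ V, ‖v‖ = 1 ∧ c = ‖W.starProjection v‖}

variable {U V W : Submodule ℝ E}

section

variable [W.HasOrthogonalProjection]

theorem bddBelow_minProjNorm_set :
    BddBelow {c : ℝ | ∃ v ∈ V, ‖v‖ = 1 ∧ c = ‖W.starProjection v‖} :=
  ⟨0, by rintro _ ⟨v, -, -, rfl⟩; exact norm_nonneg _⟩

theorem minProjNorm_le {v : E} (hv : v ∈ V) (hv1 : ‖v‖ = 1) :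
    minProjNorm V W ≤ ‖W.starProjection v‖ :=
  csInf_le bddBelow_minProjNorm_set ⟨v, hv, hv1, rfl⟩

theorem nonempty_minProjNorm_set (hV : V ≠ ⊥) :
    {c : ℝ | ∃ v ∈ V, ‖v‖ = 1 ∧ c = ‖W.starProjection v‖}.Nonempty := by
  obtain ⟨v, hv, hv1⟩ := V.exists_mem_norm_eq_one hV
  exact ⟨_, v, hv, hv1, rfl⟩

theorem le_minProjNorm_iff (hV : V ≠ ⊥) {c : ℝ} :
    c ≤ minProjNorm V W ↔ ∀ v ∈ V, c * ‖v‖ ≤ ‖W.starProjection v‖ := by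
  rw [minProjNorm, le_csInf_iff bddBelow_minProjNorm_set (nonempty_minProjNorm_set hV)]
  constructor
  · intro h v hv
    rcases eq_or_ne v 0 with rfl | hv0
    · simp
    have := h _ ⟨‖v‖⁻¹ • v, V.smul_mem _ hv, norm_smul_inv_norm hv0, rfl⟩
    rw [map_smul, norm_smul, norm_inv, norm_norm, le_inv_mul_iff₀ (norm_pos_iff.2 hv0)] at this
    linarith
  · rintro h _ ⟨v, hv, hv1, rfl⟩
    simpa [hv1] using h v hv

theorem one_le_minProjNorm_iff (hV : V ≠ ⊥) : 1 ≤ minProjNorm V W ↔ V ≤ W := by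
  simp only [le_minProjNorm_iff hV, one_mul, SetLike.le_def, W.mem_iff_norm_starProjection]
  exact forall₂_congr fun v _ => ⟨(W.norm_starProjection_apply_le v).antisymm, ge_of_eq⟩

theorem arccos_minProjNorm_le (hV : V ≠ ⊥) {s : ℝ}
    (h : ∀ v ∈ V, ‖v‖ = 1 → arccos ‖W.starProjection v‖ ≤ s) : arccos (minProjNorm V W) ≤ s := by
  rw [minProjNorm, antitone_arccos.map_csInf_of_continuousAt continuous_arccos.continuousAt
    (nonempty_minProjNorm_set hV) bddBelow_minProjNorm_set]
  refine csSup_le ((nonempty_minProjNorm_set hV).image _) ?_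
  rintro _ ⟨_, ⟨v, hv, hv1, rfl⟩, rfl⟩
  exact h v hv hv1

end

theorem arccos_minProjNorm_le_add [V.HasOrthogonalProjection] [W.HasOrthogonalProjection]
    (hU : U ≠ ⊥) (hV : V ≠ ⊥) (hW : W ≠ ⊥) :
    arccos (minProjNorm U W) ≤ arccos (minProjNorm U V) + arccos (minProjNorm V W) := by
  have angle_eq {x y : E} (hx : ‖x‖ = 1) (hy : ‖y‖ = 1) : angle x y = arccos ⟪x, y⟫_ℝ := by
    simp [angle, hx, hy]
  refine arccos_minProjNorm_le hU fun u hu hu1 => ?_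
  obtain ⟨v, hv, hv1, huv⟩ := (V.isGreatest_inner_norm_eq_one hV u).1
  obtain ⟨w, hw, hw1, hvw⟩ := (W.isGreatest_inner_norm_eq_one hW v).1
  calc arccos ‖W.starProjection u‖ ≤ arccos ⟪u, w⟫_ℝ :=
        arccos_le_arccos ((W.isGreatest_inner_norm_eq_one hW u).2 ⟨w, hw, hw1, rfl⟩)
    _ ≤ angle u v + angle v w := (angle_eq hu1 hw1).symm.trans_le (angle_le_angle_add_angle u v w)
    _ = arccos ‖V.starProjection u‖ + arccos ‖W.starProjection v‖ := by
        rw [angle_eq hu1 hv1, angle_eq hv1 hw1, huv, hvw]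
    _ ≤ arccos (minProjNorm U V) + arccos (minProjNorm V W) :=
        add_le_add (arccos_le_arccos (minProjNorm_le hu hu1))
          (arccos_le_arccos (minProjNorm_le hv hv1))

theorem Submodule.orthogonalProjectionOnto_comp_subtypeL_eq_adjoint
    (V W : Submodule ℝ E) [CompleteSpace V] [CompleteSpace W] :
    V.orthogonalProjectionOnto ∘L W.subtypeL =
      ContinuousLinearMap.adjoint (W.orthogonalProjectionOnto ∘L V.subtypeL) := by
  rw [ContinuousLinearMap.eq_adjoint_iff]
  intro w v
  simp

theorem mul_norm_le_norm_starProjection_symm [FiniteDimensional ℝ V] [FiniteDimensional ℝ W]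
    (hVW : finrank ℝ V = finrank ℝ W) {c : ℝ}
    (h : ∀ v ∈ V, c * ‖v‖ ≤ ‖W.starProjection v‖) {w : E} (hw : w ∈ W) :
    c * ‖w‖ ≤ ‖V.starProjection w‖ := by
  simpa [← V.orthogonalProjectionOnto_comp_subtypeL_eq_adjoint W] using
    ContinuousLinearMap.mul_norm_le_norm_adjoint_apply hVW
      (A := W.orthogonalProjectionOnto ∘L V.subtypeL) (fun v => by simpa using h v v.2) ⟨w, hw⟩

theorem minProjNorm_comm [FiniteDimensional ℝ V] [FiniteDimensional ℝ W]
    (hVW : finrank ℝ V = finrank ℝ W) : minProjNorm V W = minProjNorm W V := by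
  rcases eq_or_ne V ⊥ with rfl | hV
  · obtain rfl : W = ⊥ := by rwa [finrank_bot, eq_comm, Submodule.finrank_eq_zero] at hVW
    rfl
  have hW : W ≠ ⊥ := by
    rwa [Ne, ← Submodule.finrank_eq_zero, ← hVW, Submodule.finrank_eq_zero]
  refine eq_of_forall_le_iff fun c => ?_
  rw [le_minProjNorm_iff hV, le_minProjNorm_iff hW]
  exact ⟨fun h _ => mul_norm_le_norm_starProjection_symm hVW h,
    fun h _ => mul_norm_le_norm_starProjection_symm hVW.symm h⟩

end

theorem subAngle_eq_arccos_minProjNorm {d : ℕ} (V W : Submodule ℝ (Euc d)) :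
    subAngle V W = arccos (minProjNorm V W) := by
  simp only [subAngle, minProjNorm, W.sSup_inner_norm_eq_one]

/-- The largest principal angle satisfies the triangle inequality
`∠(U,W) ≤ ∠(U,V) + ∠(V,W)` on subspaces of equal dimension `k ≥ 1`; together with symmetry and
definiteness, `∠` is a metric on the Grassmannian `𝒢(k,d)`. -/
theorem subAngle_triangle_symm_def {d k : ℕ} (hk : 1 ≤ k)
    (U V W : Submodule ℝ (Euc d))
    (hU : Module.finrank ℝ U = k) (hV : Module.finrank ℝ V = k)
    (hW : Module.finrank ℝ W = k) :
    subAngle U W ≤ subAngle U V + subAngle V W ∧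
    subAngle U V = subAngle V U ∧
    (subAngle U V = 0 ↔ U = V) := by
  have ne_bot {X : Submodule ℝ (Euc d)} (hX : finrank ℝ X = k) : X ≠ ⊥ := by
    rw [Ne, ← Submodule.finrank_eq_zero]
    omega
  simp only [subAngle_eq_arccos_minProjNorm]
  refine ⟨arccos_minProjNorm_le_add (ne_bot hU) (ne_bot hV) (ne_bot hW),
    congrArg arccos (minProjNorm_comm (hU.trans hV.symm)), ?_⟩
  rw [arccos_eq_zero, one_le_minProjNorm_iff (ne_bot hU)]
  exact ⟨fun hle => Submodule.eq_of_le_of_finrank_eq hle (hU.trans hV.symm), le_of_eq⟩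
end
end

section
/- For any two vectors v, w ∈ ℝ^d with ‖v‖ < ‖w‖ one has tan²(∠(v+w, w)) ≤ ‖v‖² / (‖w‖² − ‖v‖²), where ∠(v+w,w) is the angle between the lines spanned by v+w and w (note v + w ≠ 0 since ‖v‖ < ‖w‖). -/
open Filter

noncomputable section

/-! The squared tangent of the angle between the lines `ℝ x` and `ℝ y` is the Gram determinant
`‖x‖²‖y‖² - ⟪x, y⟫²` divided by `⟪x, y⟫²`. The Gram determinant of `(v + w, w)` equals that of
`(v, w)`, and with `a = ⟪v, w⟫` the claim reduces to the identity
`‖v‖²(a + ‖w‖²)² - (‖v‖²‖w‖² - a²)(‖w‖² - ‖v‖²) = ‖w‖²(a + ‖v‖²)²`. -/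

open RealInnerProductSpace

theorem Real.tan_arccos_sq {x : ℝ} (hx : x ^ 2 ≤ 1) :
    Real.tan (Real.arccos x) ^ 2 = (1 - x ^ 2) / x ^ 2 := by
  rw [Real.tan_arccos, div_pow, Real.sq_sqrt (sub_nonneg.2 hx)]

theorem tan_sq_vecAngle {d : ℕ} (x y : Euc d) :
    Real.tan (vecAngle x y) ^ 2 = (‖x‖ ^ 2 * ‖y‖ ^ 2 - ⟪x, y⟫ ^ 2) / ⟪x, y⟫ ^ 2 := by
  have hcos : (|⟪x, y⟫| / (‖x‖ * ‖y‖)) ^ 2 ≤ 1 := by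
    rw [sq_le_one_iff_abs_le_one, abs_div, abs_abs, abs_mul, abs_norm, abs_norm]
    exact div_le_one_of_le₀ (abs_real_inner_le_norm x y) (by positivity)
  rw [vecAngle, Real.tan_arccos_sq hcos, div_pow, sq_abs]
  rcases eq_or_ne (‖x‖ * ‖y‖) 0 with hxy | hxy
  · -- junk values on both sides: `tan (arccos 0) = tan (π / 2) = 0` and `0 / 0 = 0`
    have hinner : ⟪x, y⟫ = 0 := by
      rcases mul_eq_zero.1 hxy with hx | hy
      · simp [norm_eq_zero.1 hx]
      · simp [norm_eq_zero.1 hy]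
    simp [hinner]
  · obtain ⟨hx, hy⟩ := mul_ne_zero_iff.1 hxy
    field_simp

theorem gram_add_left {E : Type*} [NormedAddCommGroup E] [InnerProductSpace ℝ E] (v w : E) :
    ‖v + w‖ ^ 2 * ‖w‖ ^ 2 - ⟪v + w, w⟫ ^ 2 = ‖v‖ ^ 2 * ‖w‖ ^ 2 - ⟪v, w⟫ ^ 2 := by
  rw [norm_add_sq_real, inner_add_left, real_inner_self_eq_norm_sq]
  ring

theorem inner_add_left_self_pos {E : Type*} [NormedAddCommGroup E] [InnerProductSpace ℝ E]
    {v w : E} (h : ‖v‖ < ‖w‖) : 0 < ⟪v + w, w⟫ := by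
  rw [inner_add_left, real_inner_self_eq_norm_sq]
  nlinarith [neg_abs_le ⟪v, w⟫, abs_real_inner_le_norm v w, norm_nonneg v]

/-- For vectors `v, w ∈ ℝ^d` with `‖v‖ < ‖w‖`,
`tan²(∠(v+w,w)) ≤ ‖v‖² / (‖w‖² − ‖v‖²)`. -/
theorem tan_sq_vecAngle_add_le {d : ℕ} (v w : Euc d) (h : ‖v‖ < ‖w‖) :
    Real.tan (vecAngle (v + w) w) ^ 2 ≤ ‖v‖ ^ 2 / (‖w‖ ^ 2 - ‖v‖ ^ 2) := by
  have hgap : 0 < ‖w‖ ^ 2 - ‖v‖ ^ 2 := sub_pos.2 (pow_lt_pow_left₀ h (norm_nonneg v) two_ne_zero)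
  rw [tan_sq_vecAngle, gram_add_left,
    div_le_div_iff₀ (pow_pos (inner_add_left_self_pos h) 2) hgap,
    inner_add_left, real_inner_self_eq_norm_sq]
  have hdiff : ‖v‖ ^ 2 * (⟪v, w⟫ + ‖w‖ ^ 2) ^ 2
      - (‖v‖ ^ 2 * ‖w‖ ^ 2 - ⟪v, w⟫ ^ 2) * (‖w‖ ^ 2 - ‖v‖ ^ 2)
      = ‖w‖ ^ 2 * (⟪v, w⟫ + ‖v‖ ^ 2) ^ 2 := by ring
  linarith [hdiff, mul_nonneg (sq_nonneg ‖w‖) (sq_nonneg (⟪v, w⟫ + ‖v‖ ^ 2))]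
end
end

section
/- Let V ⊆ ℝ^d be a subspace of dimension k ≥ 1 and let P ∈ ℝ^{d×d} be a matrix such that for some 0 ≤ q < 1 one has ‖(I−P)v‖ ≤ q‖Pv‖ for all v ∈ V. Then dim(V) = dim(PV), and the largest principal angle between V and PV satisfies ∠(V, PV) ≤ q / (1−q²)^{1/2}. -/
open Filter

noncomputable section

/-! Squaring `‖v - P v‖ ≤ q ‖P v‖` for a unit vector `v` gives
`2 ⟪v, P v⟫ ≥ 1 + (1 - q²) ‖P v‖² ≥ 2 √(1 - q²) ‖P v‖`, so `P v` is a nonzero vector of `PV`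
whose angle with `v` has cosine at least `√(1 - q²)`. Hence every unit `v ∈ V` lies within
angle `arccos √(1 - q²) = arcsin q ≤ tan (arcsin q) = q / √(1 - q²)` of `PV`; injectivity of
`P` on `V` also follows, since `P v = 0` forces `v = 0`. -/

open Real

lemma ne_zero_of_norm_sub_le_mul_norm {E : Type*} [NormedAddCommGroup E] {v w : E} {q : ℝ}
    (hvw : ‖v - w‖ ≤ q * ‖w‖) (hv : v ≠ 0) : w ≠ 0 := by
  rintro rfl
  simp_all

lemma finrank_map_eq_of_norm_sub_le {E : Type*} [NormedAddCommGroup E] [NormedSpace ℝ E]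
    (V : Submodule ℝ E) (P : E →ₗ[ℝ] E) (q : ℝ) (hP : ∀ v ∈ V, ‖v - P v‖ ≤ q * ‖P v‖) :
    Module.finrank ℝ (V.map P) = Module.finrank ℝ V := by
  have hinj : Function.Injective (P.domRestrict V) := by
    rw [← LinearMap.ker_eq_bot, LinearMap.ker_eq_bot']
    rintro ⟨v, hv⟩ hPv
    by_contra hne
    exact ne_zero_of_norm_sub_le_mul_norm (hP v hv) (by simpa using hne) hPv
  rw [← LinearMap.range_domRestrict, LinearMap.finrank_range_of_inj hinj]

lemma sqrt_one_sub_sq_mul_norm_mul_norm_le_inner {E : Type*} [NormedAddCommGroup E]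
    [InnerProductSpace ℝ E] {v w : E} {q : ℝ} (hq : q ^ 2 ≤ 1) (hvw : ‖v - w‖ ≤ q * ‖w‖) :
    √(1 - q ^ 2) * ‖v‖ * ‖w‖ ≤ inner ℝ v w := by
  have hsq : ‖v‖ ^ 2 - 2 * inner ℝ v w + ‖w‖ ^ 2 ≤ q ^ 2 * ‖w‖ ^ 2 := by
    rw [← norm_sub_sq_real, ← mul_pow]
    exact pow_le_pow_left₀ (norm_nonneg _) hvw 2
  have hb : √(1 - q ^ 2) ^ 2 = 1 - q ^ 2 := sq_sqrt (by linarith)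
  -- AM-GM: 2 b ‖v‖ ‖w‖ ≤ ‖v‖² + b² ‖w‖²
  nlinarith [sq_nonneg (‖v‖ - √(1 - q ^ 2) * ‖w‖)]

lemma subAngle_le_arccos {d : ℕ} {V W : Submodule ℝ (Euc d)} (hV : V ≠ ⊥) {c : ℝ}
    (h : ∀ v ∈ V, ‖v‖ = 1 → ∃ w ∈ W, w ≠ 0 ∧ c * ‖w‖ ≤ inner ℝ v w) :
    subAngle V W ≤ arccos c := by
  refine arccos_le_arccos (le_csInf ?_ ?_)
  · obtain ⟨v, hv, hv0⟩ := Submodule.exists_mem_ne_zero_of_ne_bot hV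
    exact ⟨_, ‖v‖⁻¹ • v, V.smul_mem _ hv, norm_smul_inv_norm hv0, rfl⟩
  rintro _ ⟨v, hv, hv1, rfl⟩
  obtain ⟨w, hw, hw0, hcw⟩ := h v hv hv1
  have hbdd : BddAbove {r : ℝ | ∃ w ∈ W, ‖w‖ = 1 ∧ r = inner ℝ v w} := by
    refine ⟨1, ?_⟩
    rintro _ ⟨u, -, hu1, rfl⟩
    simpa [hv1, hu1] using real_inner_le_norm v u
  refine le_csSup_of_le hbdd ⟨‖w‖⁻¹ • w, W.smul_mem _ hw, norm_smul_inv_norm hw0, rfl⟩ ?_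
  rw [real_inner_smul_right, inv_mul_eq_div, le_div_iff₀ (norm_pos_iff.2 hw0)]
  exact hcw

lemma arccos_sqrt_one_sub_sq_le {q : ℝ} (hq0 : 0 ≤ q) (hq1 : q < 1) :
    arccos √(1 - q ^ 2) ≤ q / √(1 - q ^ 2) := by
  rw [← arcsin_eq_arccos hq0, ← tan_arcsin]
  exact le_tan (arcsin_nonneg.2 hq0) (arcsin_lt_pi_div_two.2 hq1)

/-- If `V ⊆ ℝ^d` has dimension `k ≥ 1` and the matrix (linear map) `P`
satisfies `‖(I−P)v‖ ≤ q‖Pv‖` on `V` for some `0 ≤ q < 1`, then `dim(PV) = dim V` and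
`∠(V, PV) ≤ q/√(1−q²)`. -/
theorem subAngle_map_le_of_contraction {d k : ℕ} (hk : 1 ≤ k)
    (V : Submodule ℝ (Euc d)) (hV : Module.finrank ℝ V = k)
    (P : Euc d →ₗ[ℝ] Euc d) (q : ℝ) (hq0 : 0 ≤ q) (hq1 : q < 1)
    (hcontr : ∀ v ∈ V, ‖v - P v‖ ≤ q * ‖P v‖) :
    Module.finrank ℝ (V.map P) = Module.finrank ℝ V ∧
    subAngle V (V.map P) ≤ q / Real.sqrt (1 - q ^ 2) := by
  refine ⟨finrank_map_eq_of_norm_sub_le V P q hcontr, ?_⟩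
  have hVne : V ≠ ⊥ := Submodule.one_le_finrank_iff.1 (hV ▸ hk)
  have hq : q ^ 2 ≤ 1 := by nlinarith
  refine (subAngle_le_arccos hVne fun v hv hv1 => ?_).trans
    (arccos_sqrt_one_sub_sq_le hq0 hq1)
  have hv0 : v ≠ 0 := by rintro rfl; simp at hv1
  refine ⟨P v, Submodule.mem_map_of_mem hv, ne_zero_of_norm_sub_le_mul_norm (hcontr v hv) hv0, ?_⟩
  simpa [hv1] using sqrt_one_sub_sq_mul_norm_mul_norm_le_inner hq (hcontr v hv)
end
end

section
/- Let A_n ∈ ℝ^{d×d}, n ∈ ℕ, be invertible matrices with solution operator Φ, let s ∈ {1,…,d}, and for V ∈ 𝒢(s,d) set a_{m,n}(V) := Σ_{j=m}^{n} ∠(Φ(j−1,0)V, Φ(j,0)V). Then the sequence b_n := sup_{V∈𝒢(s,d)} sup_{k∈ℕ} a_{k+1,k+n}(V), n ≥ 1, is subadditive (b_{n+m} ≤ b_n + b_m for all n,m ≥ 1), and consequently lim_{n→∞} b_n/n exists and equals inf_{n≥1} b_n/n; in particular the limit defining the upper uniform inner angular value θ̄_{[s]} = lim_{n→∞} (1/n)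 sup_{V∈𝒢(s,d)} sup_{k∈ℕ} a_{k+1,k+n}(V) exists. -/
open Filter

noncomputable section

/-- Forward product `A (m+n-1) ⋯ A m`. -/
noncomputable def PhiF {d : ℕ} (A : ℕ → (Euc d →L[ℝ] Euc d)) (m : ℕ) : ℕ → (Euc d →L[ℝ] Euc d)
  | 0 => 1
  | n + 1 => A (m + n) ∘L PhiF A m n

/-- Solution operator `Φ(n,m) = A_{n-1} ⋯ A_m` for `n ≥ m`,
`Φ(n,m) = A_n⁻¹ ⋯ A_{m-1}⁻¹` for `n < m`. -/
noncomputable def Phi {d : ℕ} (A : ℕ → (Euc d →L[ℝ] Euc d)) (n m : ℕ) : Euc d →L[ℝ] Euc d :=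
  if m ≤ n then PhiF A m (n - m) else Ring.inverse (PhiF A n (m - n))

/-- `a_{m,n}(V) = Σ_{j=m}^n ∠(Φ(j-1,0)V, Φ(j,0)V)`. -/
noncomputable def angSum {d : ℕ} (A : ℕ → (Euc d →L[ℝ] Euc d)) (V : Submodule ℝ (Euc d))
    (m n : ℕ) : ℝ :=
  ∑ j ∈ Finset.Icc m n, subAngle (V.map (Phi A (j - 1) 0 : Euc d →ₗ[ℝ] Euc d)) (V.map (Phi A j 0 : Euc d →ₗ[ℝ] Euc d))

/-- `b_n = sup_{V ∈ 𝒢(s,d)} sup_{k ∈ ℕ} a_{k+1,k+n}(V)`. -/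
noncomputable def bSeq {d : ℕ} (A : ℕ → (Euc d →L[ℝ] Euc d)) (s n : ℕ) : ℝ :=
  sSup {x : ℝ | ∃ V : Submodule ℝ (Euc d), Module.finrank ℝ V = s ∧
    ∃ k : ℕ, x = angSum A V (k + 1) (k + n)}

/-!
Splitting the window `k+1, …, k+n+m` after `k+n` writes `a_{k+1,k+n+m}(V)` as
`a_{k+1,k+n}(V) + a_{k+n+1,k+n+m}(V)`, a window of length `n` plus one of length `m`, so every
term of the supremum defining `b_{n+m}` is at most `b_n + b_m`. Angles are bounded, so the
suprema are finite and nonnegative, and Fekete's lemma gives the limit.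
-/

section

variable {d : ℕ} (A : ℕ → (Euc d →L[ℝ] Euc d))

lemma subAngle_nonneg (V W : Submodule ℝ (Euc d)) : 0 ≤ subAngle V W :=
  Real.arccos_nonneg _

lemma subAngle_le_pi (V W : Submodule ℝ (Euc d)) : subAngle V W ≤ Real.pi :=
  Real.arccos_le_pi _

lemma angSum_nonneg (V : Submodule ℝ (Euc d)) (m n : ℕ) : 0 ≤ angSum A V m n :=
  Finset.sum_nonneg fun _ _ => subAngle_nonneg _ _

lemma angSum_le_mul_pi (V : Submodule ℝ (Euc d)) (k n : ℕ) :
    angSum A V (k + 1) (k + n) ≤ n * Real.pi :=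
  calc angSum A V (k + 1) (k + n)
      ≤ ∑ _j ∈ Finset.Icc (k + 1) (k + n), Real.pi :=
        Finset.sum_le_sum fun _ _ => subAngle_le_pi _ _
    _ = n * Real.pi := by simp

lemma angSum_add {m n p : ℕ} (V : Submodule ℝ (Euc d)) (hmn : m ≤ n) (hnp : n ≤ p) :
    angSum A V (m + 1) n + angSum A V (n + 1) p = angSum A V (m + 1) p := by
  simp only [angSum, Finset.Icc_add_one_left_eq_Ioc]
  exact Finset.sum_Ioc_consecutive _ hmn hnp

lemma angSum_le_bSeq {s : ℕ} {V : Submodule ℝ (Euc d)} (hV : Module.finrank ℝ V = s) (k n : ℕ) :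
    angSum A V (k + 1) (k + n) ≤ bSeq A s n :=
  le_csSup ⟨n * Real.pi, by rintro _ ⟨W, -, j, rfl⟩; exact angSum_le_mul_pi A W j n⟩
    ⟨V, hV, k, rfl⟩

-- `hc` covers `s > d`, where the supremum is over `∅` and `sSup ∅ = 0` in `ℝ`.
lemma bSeq_le {s n : ℕ} {c : ℝ} (hc : 0 ≤ c)
    (h : ∀ V : Submodule ℝ (Euc d), Module.finrank ℝ V = s → ∀ k, angSum A V (k + 1) (k + n) ≤ c) :
    bSeq A s n ≤ c :=
  Real.sSup_le (by rintro _ ⟨V, hV, k, rfl⟩; exact h V hV k) hc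

lemma bSeq_nonneg (s n : ℕ) : 0 ≤ bSeq A s n :=
  Real.sSup_nonneg (by rintro _ ⟨V, -, k, rfl⟩; exact angSum_nonneg A V _ _)

lemma bSeq_subadditive (s : ℕ) : Subadditive (bSeq A s) := by
  intro n m
  refine bSeq_le A (add_nonneg (bSeq_nonneg A s n) (bSeq_nonneg A s m)) fun V hV k => ?_
  rw [← add_assoc, ← angSum_add A V (Nat.le_add_right k n) (Nat.le_add_right _ m)]
  exact add_le_add (angSum_le_bSeq A hV k n) (angSum_le_bSeq A hV (k + n) m)

end

theorem bSeq_subadditive_and_tendsto_general {d : ℕ} (A : ℕ → (Euc d →L[ℝ] Euc d))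
    (s : ℕ) :
    (∀ n m : ℕ, 1 ≤ n → 1 ≤ m → bSeq A s (n + m) ≤ bSeq A s n + bSeq A s m) ∧
    Tendsto (fun n : ℕ => bSeq A s n / n) atTop
      (nhds (sInf {x : ℝ | ∃ n : ℕ, 1 ≤ n ∧ x = bSeq A s n / n})) := by
  have hsub := bSeq_subadditive A s
  refine ⟨fun n m _ _ => hsub n m, ?_⟩
  have hbdd : BddBelow (Set.range fun n => bSeq A s n / n) :=
    ⟨0, by rintro _ ⟨n, rfl⟩; exact div_nonneg (bSeq_nonneg A s n) n.cast_nonneg⟩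
  convert hsub.tendsto_lim hbdd using 2
  unfold Subadditive.lim
  refine congrArg sInf (Set.ext fun x => ?_)
  exact ⟨fun ⟨n, hn, hx⟩ => ⟨n, hn, hx.symm⟩, fun ⟨n, hn, hx⟩ => ⟨n, hn, hx.symm⟩⟩

/-- The sequence `b_n = sup_V sup_k a_{k+1,k+n}(V)` is subadditive and hence
`b_n/n` converges to `inf_{n≥1} b_n/n`; in particular the limit defining the upper uniform
inner angular value `θ̄_[s]` exists. -/
theorem bSeq_subadditive_and_tendsto {d : ℕ} (A : ℕ → (Euc d →L[ℝ] Euc d))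
    (hA : ∀ n, IsUnit (A n)) (s : ℕ) (hs1 : 1 ≤ s) (hsd : s ≤ d) :
    (∀ n m : ℕ, 1 ≤ n → 1 ≤ m → bSeq A s (n + m) ≤ bSeq A s n + bSeq A s m) ∧
    Tendsto (fun n : ℕ => bSeq A s n / n) atTop
      (nhds (sInf {x : ℝ | ∃ n : ℕ, 1 ≤ n ∧ x = bSeq A s n / n})) :=
  bSeq_subadditive_and_tendsto_general A s
end
end

section
/- Under the spectral hypotheses, if V = ⊕_{i=1}^ℓ W_i is a direct sum of subspaces with W_i ⊆ 𝒲_k^i for each i (i.e. V is a trace space at time k), then 𝒫_{k,i}(Q_{k,i}^s V) = W_i for every i = 1,…,ℓ, and hence 𝒯_k(V) = V. Consequently the set 𝒟_k(s,d) of s-dimensional trace spaces at time k equals { 𝒯_k(V) : V ∈ 𝒢(s,d) }. -/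
open Filter

noncomputable section

/-- Fiber projector `𝒫_{k,i} = P_{k,i}^s − P_{k,i+1}^s`. -/
noncomputable def fiberP {d : ℕ} (P : ℕ → ℕ → (Euc d →L[ℝ] Euc d)) (k i : ℕ) :
    Euc d →L[ℝ] Euc d :=
  P k i - P k (i + 1)

/-- The spectral fiber `𝒲_k^i = range 𝒫_{k,i}`. -/
noncomputable def fiberW {d : ℕ} (P : ℕ → ℕ → (Euc d →L[ℝ] Euc d)) (k i : ℕ) :
    Submodule ℝ (Euc d) :=
  LinearMap.range (fiberP P k i : Euc d →ₗ[ℝ] Euc d)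

/-- The trace space `𝒯_k(V) = Σ_{i=1}^ℓ 𝒫_{k,i}(Q_{k,i}^s V)`, where
`Q_{k,i}^s V = range(P_{k,i}^s) ∩ V`. -/
noncomputable def traceSpace {d : ℕ} (P : ℕ → ℕ → (Euc d →L[ℝ] Euc d)) (ℓ k : ℕ)
    (V : Submodule ℝ (Euc d)) : Submodule ℝ (Euc d) :=
  ⨆ i ∈ Finset.Icc 1 ℓ, (LinearMap.range (P k i : Euc d →ₗ[ℝ] Euc d) ⊓ V).map (fiberP P k i : Euc d →ₗ[ℝ] Euc d)

/-- `V` is a trace space at time `k`: a (direct) sum of subspaces of the fibers. -/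
def IsTraceAt {d : ℕ} (P : ℕ → ℕ → (Euc d →L[ℝ] Euc d)) (ℓ k : ℕ)
    (V : Submodule ℝ (Euc d)) : Prop :=
  ∃ W : ℕ → Submodule ℝ (Euc d),
    (∀ i, 1 ≤ i → i ≤ ℓ → W i ≤ fiberW P k i) ∧ V = ⨆ i ∈ Finset.Icc 1 ℓ, W i

/-! The projectors `P_{k,i}` have nested ranges and kernels, so `P_a P_b = P_b = P_b P_a` for
`a ≤ b`, and the fiber projectors `𝒫_i = P_i - P_{i+1}` are orthogonal idempotents. Hence `𝒫_i`
fixes `W_i` and kills every other `W_j`, so `𝒫_i V = W_i`; as `W_i ⊆ range P_i ∩ V ⊆ V`, also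
`𝒫_i (range P_i ∩ V) = W_i`, and summing gives `𝒯_k(V) = V`.

Conversely every `𝒯_k(V)` is a trace space, and `dim 𝒯_k(V) = dim V`: on `range P_i ∩ V` the
kernel of `𝒫_i` is `range P_{i+1} ∩ V`, and the image of `𝒫_i` meets `range P_{i+1}` (which
contains all later pieces) only in `0`. So the dimension telescopes down to
`dim (range P_{ℓ+1} ∩ V) = 0`. -/

open Module LinearMap

theorem Submodule.finrank_map_add_finrank_inf_ker {K E F : Type*} [DivisionRing K]
    [AddCommGroup E] [Module K E] [AddCommGroup F] [Module K F] [FiniteDimensional K E]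
    (f : E →ₗ[K] F) (S : Submodule K E) :
    finrank K (S.map f) + finrank K ↥(S ⊓ ker f) = finrank K S := by
  have := (f.domRestrict S).finrank_range_add_finrank_ker
  rwa [range_domRestrict, ker_domRestrict, ← Submodule.finrank_map_subtype_eq,
    Submodule.map_comap_subtype] at this

theorem Submodule.finrank_sup_of_disjoint {K E : Type*} [DivisionRing K]
    [AddCommGroup E] [Module K E] [FiniteDimensional K E] {S T : Submodule K E}
    (h : Disjoint S T) : finrank K ↥(S ⊔ T) = finrank K S + finrank K T := by
  rw [← Submodule.finrank_sup_add_finrank_inf_eq, h.eq_bot, finrank_bot, add_zero]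

theorem OrthogonalIdempotents.map_iSup {R E ι : Type*} [Ring R] [AddCommGroup E] [Module R E]
    {e : ι → Module.End R E} (he : OrthogonalIdempotents e) {W : ι → Submodule R E}
    (hW : ∀ j, W j ≤ range (e j)) (i : ι) : (⨆ j, W j).map (e i) = W i := by
  classical
  rw [Submodule.map_iSup]
  refine le_antisymm (iSup_le fun j => ?_) (le_iSup_of_le i fun x hx => ?_)
  · rintro _ ⟨_, hx, rfl⟩
    obtain ⟨y, rfl⟩ := hW j hx
    rw [← Module.End.mul_apply, he.mul_eq]
    split_ifs with hij
    · exact hij ▸ hx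
    · exact zero_mem _
  · exact ⟨x, hx, (LinearMap.IsIdempotentElem.mem_range_iff (he.idem i)).mp (hW i hx)⟩

/-- `p i`, `1 ≤ i ≤ ℓ + 1`, plays the role of the projectors `P_{k,i}^s` at a fixed time `k`. -/
structure IsProjectionFlag {R E : Type*} [Ring R] [AddCommGroup E] [Module R E]
    (p : ℕ → Module.End R E) (ℓ : ℕ) : Prop where
  isIdempotentElem : ∀ i, 1 ≤ i → i ≤ ℓ + 1 → IsIdempotentElem (p i)
  range_succ_le : ∀ i, 1 ≤ i → i ≤ ℓ → range (p (i + 1)) ≤ range (p i)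
  ker_le_succ : ∀ i, 1 ≤ i → i ≤ ℓ → ker (p i) ≤ ker (p (i + 1))

namespace IsProjectionFlag

section Ring

variable {R E : Type*} [Ring R] [AddCommGroup E] [Module R E] {p : ℕ → Module.End R E} {ℓ : ℕ}
  (hp : IsProjectionFlag p ℓ)
include hp

theorem range_le {a b : ℕ} (ha : 1 ≤ a) (hab : a ≤ b) (hb : b ≤ ℓ + 1) :
    range (p b) ≤ range (p a) := by
  induction b, hab using Nat.le_induction with
  | base => exact le_rfl
  | succ b hab ih => exact (hp.range_succ_le b (ha.trans hab) (by omega)).trans (ih (by omega))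

theorem ker_le {a b : ℕ} (ha : 1 ≤ a) (hab : a ≤ b) (hb : b ≤ ℓ + 1) :
    ker (p a) ≤ ker (p b) := by
  induction b, hab using Nat.le_induction with
  | base => exact le_rfl
  | succ b hab ih => exact (ih (by omega)).trans (hp.ker_le_succ b (ha.trans hab) (by omega))

theorem mul_eq_right {a b : ℕ} (ha : 1 ≤ a) (hab : a ≤ b) (hb : b ≤ ℓ + 1) :
    p a * p b = p b :=
  (LinearMap.IsIdempotentElem.comp_eq_right_iff (hp.isIdempotentElem a ha (by omega)) _).mpr
    (hp.range_le ha hab hb)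

theorem mul_eq_left {a b : ℕ} (ha : 1 ≤ a) (hab : a ≤ b) (hb : b ≤ ℓ + 1) :
    p b * p a = p b :=
  (LinearMap.IsIdempotentElem.comp_eq_left_iff (hp.isIdempotentElem a ha (by omega)) _).mpr
    (hp.ker_le ha hab hb)

theorem fiber_mul_fiber {i j : ℕ} (hi : 1 ≤ i) (hiℓ : i ≤ ℓ) (hj : 1 ≤ j) (hjℓ : j ≤ ℓ) :
    (p i - p (i + 1)) * (p j - p (j + 1)) = if i = j then p i - p (i + 1) else 0 := by
  rw [mul_sub, sub_mul, sub_mul]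
  rcases lt_trichotomy i j with h | rfl | h
  · rw [if_neg h.ne, hp.mul_eq_right hi h.le (by omega), hp.mul_eq_right hi (by omega) (by omega),
      hp.mul_eq_right (by omega) h (by omega),
      hp.mul_eq_right (by omega) (by omega) (by omega)]
    simp only [sub_self]
  · rw [if_pos rfl, hp.mul_eq_right hi le_rfl (by omega), hp.mul_eq_right hi (by omega) (by omega),
      hp.mul_eq_left hi (by omega) (by omega), hp.mul_eq_right (by omega) le_rfl (by omega)]
    abel
  · rw [if_neg h.ne', hp.mul_eq_left hj h.le (by omega), hp.mul_eq_left (by omega) h (by omega),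
      hp.mul_eq_left hj (by omega) (by omega),
      hp.mul_eq_left (by omega) (by omega) (by omega)]
    simp only [sub_self]

theorem orthogonalIdempotents_fiber :
    OrthogonalIdempotents fun i : Finset.Icc 1 ℓ => p i - p (i + 1) := by
  classical
  rw [OrthogonalIdempotents.iff_mul_eq]
  rintro ⟨i, hi⟩ ⟨j, hj⟩
  rw [Finset.mem_Icc] at hi hj
  simpa [Subtype.ext_iff] using hp.fiber_mul_fiber hi.1 hi.2 hj.1 hj.2

theorem range_fiber_le {a j : ℕ} (ha : 1 ≤ a) (haj : a ≤ j) (hjℓ : j ≤ ℓ) :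
    range (p j - p (j + 1)) ≤ range (p a) := by
  refine (LinearMap.IsIdempotentElem.comp_eq_right_iff
    (hp.isIdempotentElem a ha (by omega)) _).mp ?_
  change p a * (p j - p (j + 1)) = _
  rw [mul_sub, hp.mul_eq_right ha haj (by omega), hp.mul_eq_right ha (by omega) (by omega)]

theorem range_inf_ker_fiber {a : ℕ} (ha : 1 ≤ a) (haℓ : a ≤ ℓ) :
    range (p a) ⊓ ker (p a - p (a + 1)) = range (p (a + 1)) := by
  have hfix : ∀ {b}, 1 ≤ b → b ≤ ℓ + 1 → ∀ x, x ∈ range (p b) ↔ p b x = x := fun hb hbℓ _ =>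
    LinearMap.IsIdempotentElem.mem_range_iff (hp.isIdempotentElem _ hb hbℓ)
  ext x
  simp only [Submodule.mem_inf, LinearMap.mem_ker, LinearMap.sub_apply, sub_eq_zero,
    hfix ha (by omega), hfix (by omega : 1 ≤ a + 1) (by omega)]
  constructor
  · rintro ⟨h1, h2⟩
    rw [← h2, h1]
  · intro h
    have : p a x = x := (hfix ha (by omega) x).mp
      (hp.range_le ha (by omega) (by omega) ((hfix (by omega) (by omega) x).mpr h))
    exact ⟨this, by rw [this, h]⟩

theorem disjoint_range_fiber_range_succ {a : ℕ} (ha : 1 ≤ a) (haℓ : a ≤ ℓ) :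
    Disjoint (range (p a - p (a + 1))) (range (p (a + 1))) := by
  have hidem := hp.orthogonalIdempotents_fiber.idem ⟨a, Finset.mem_Icc.mpr ⟨ha, haℓ⟩⟩
  refine (LinearMap.IsIdempotentElem.isCompl hidem).disjoint.mono_right ?_
  rw [LinearMap.range_le_ker_iff]
  change (p a - p (a + 1)) * p (a + 1) = 0
  rw [sub_mul, hp.mul_eq_right ha (by omega) (by omega),
    (hp.isIdempotentElem (a + 1) (by omega) (by omega)).eq, sub_self]

variable {W : ℕ → Submodule R E} (hW : ∀ j, 1 ≤ j → j ≤ ℓ → W j ≤ range (p j - p (j + 1)))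
include hW

theorem map_fiber_range_inf_biSup {i : ℕ} (hi : 1 ≤ i) (hiℓ : i ≤ ℓ) :
    (range (p i) ⊓ ⨆ j ∈ Finset.Icc 1 ℓ, W j).map (p i - p (i + 1)) = W i := by
  have hmem : i ∈ Finset.Icc 1 ℓ := Finset.mem_Icc.mpr ⟨hi, hiℓ⟩
  have hmap : (⨆ j ∈ Finset.Icc 1 ℓ, W j).map (p i - p (i + 1)) = W i := by
    rw [iSup_subtype']
    exact hp.orthogonalIdempotents_fiber.map_iSup
      (fun j => hW j (Finset.mem_Icc.mp j.2).1 (Finset.mem_Icc.mp j.2).2) ⟨i, hmem⟩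
  refine le_antisymm (hmap ▸ Submodule.map_mono inf_le_right) fun x hx => ?_
  have hx' := hW i hi hiℓ hx
  refine ⟨x, ⟨hp.range_fiber_le hi le_rfl hiℓ hx', le_biSup W hmem hx⟩, ?_⟩
  exact (LinearMap.IsIdempotentElem.mem_range_iff
    (hp.orthogonalIdempotents_fiber.idem ⟨i, hmem⟩)).mp hx'

theorem biSup_map_fiber_range_inf_biSup :
    ⨆ i ∈ Finset.Icc 1 ℓ, (range (p i) ⊓ ⨆ j ∈ Finset.Icc 1 ℓ, W j).map (p i - p (i + 1)) =
      ⨆ j ∈ Finset.Icc 1 ℓ, W j :=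
  biSup_congr fun _ hi =>
    hp.map_fiber_range_inf_biSup hW (Finset.mem_Icc.mp hi).1 (Finset.mem_Icc.mp hi).2

end Ring

section DivisionRing

variable {K E : Type*} [DivisionRing K] [AddCommGroup E] [Module K E] [FiniteDimensional K E]
  {p : ℕ → Module.End K E} {ℓ : ℕ} (hp : IsProjectionFlag p ℓ)
include hp

theorem finrank_map_fiber_range_inf_add (V : Submodule K E) {a : ℕ} (ha : 1 ≤ a) (haℓ : a ≤ ℓ) :
    finrank K ↥((range (p a) ⊓ V).map (p a - p (a + 1))) + finrank K ↥(range (p (a + 1)) ⊓ V) =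
      finrank K ↥(range (p a) ⊓ V) := by
  rw [← hp.range_inf_ker_fiber ha haℓ, inf_right_comm]
  exact Submodule.finrank_map_add_finrank_inf_ker _ _

theorem finrank_biSup_map_fiber_range_inf (hℓ : p (ℓ + 1) = 0) (V : Submodule K E) {a : ℕ}
    (ha : 1 ≤ a) (haℓ : a ≤ ℓ + 1) :
    finrank K ↥(⨆ i ∈ Finset.Icc a ℓ, (range (p i) ⊓ V).map (p i - p (i + 1))) =
      finrank K ↥(range (p a) ⊓ V) := by
  refine Nat.decreasingInduction' (P := fun k => finrank K
    ↥(⨆ i ∈ Finset.Icc k ℓ, (range (p i) ⊓ V).map (p i - p (i + 1))) =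
      finrank K ↥(range (p k) ⊓ V)) (fun k hk hak ih => ?_) haℓ ?_
  · have hrest : ⨆ i ∈ Finset.Icc (k + 1) ℓ, (range (p i) ⊓ V).map (p i - p (i + 1)) ≤
        range (p (k + 1)) := iSup₂_le fun i hi =>
      (LinearMap.map_le_range).trans (hp.range_fiber_le (by omega) (Finset.mem_Icc.mp hi).1
        (Finset.mem_Icc.mp hi).2)
    have hdisj := (hp.disjoint_range_fiber_range_succ (by omega) (by omega : k ≤ ℓ)).mono
      (LinearMap.map_le_range (p := range (p k) ⊓ V)) hrest
    rw [← Finset.insert_Icc_add_one_left_eq_Icc (by omega), Finset.iSup_insert,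
      Submodule.finrank_sup_of_disjoint hdisj, ih,
      hp.finrank_map_fiber_range_inf_add V (by omega) (by omega)]
  · rw [Finset.Icc_eq_empty (by omega), hℓ, LinearMap.range_zero, bot_inf_eq]
    simp

end DivisionRing

end IsProjectionFlag

theorem traceSpace_of_traceSpace_general
    {d : ℕ}
    (ℓ : ℕ)
    (P : ℕ → ℕ → (Euc d →L[ℝ] Euc d))
    (hproj : ∀ n i, 1 ≤ i → i ≤ ℓ + 1 → P n i ∘L P n i = P n i)
    (hP1 : ∀ n, P n 1 = 1)
    (hPl : ∀ n, P n (ℓ + 1) = 0)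
    (hrange : ∀ n i, 1 ≤ i → i ≤ ℓ → LinearMap.range (P n (i + 1) : Euc d →ₗ[ℝ] Euc d) ≤ LinearMap.range (P n i : Euc d →ₗ[ℝ] Euc d))
    (hker : ∀ n i, 1 ≤ i → i ≤ ℓ → LinearMap.ker (P n i : Euc d →ₗ[ℝ] Euc d) ≤ LinearMap.ker (P n (i + 1) : Euc d →ₗ[ℝ] Euc d))
    (k : ℕ) (V : Submodule ℝ (Euc d)) (W : ℕ → Submodule ℝ (Euc d))
    (hW : ∀ i, 1 ≤ i → i ≤ ℓ → W i ≤ fiberW P k i)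
    (hVW : V = ⨆ i ∈ Finset.Icc 1 ℓ, W i) :
    (∀ i, 1 ≤ i → i ≤ ℓ →
      (LinearMap.range (P k i : Euc d →ₗ[ℝ] Euc d) ⊓ V).map (fiberP P k i : Euc d →ₗ[ℝ] Euc d) = W i) ∧
    traceSpace P ℓ k V = V ∧
    ∀ s : ℕ,
      {U : Submodule ℝ (Euc d) | IsTraceAt P ℓ k U ∧ Module.finrank ℝ U = s} =
      {U : Submodule ℝ (Euc d) | ∃ V' : Submodule ℝ (Euc d),
        Module.finrank ℝ V' = s ∧ U = traceSpace P ℓ k V'} := by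
  have hflag : IsProjectionFlag (fun i => (P k i : Euc d →ₗ[ℝ] Euc d)) ℓ :=
    ⟨fun i hi hiℓ => congrArg ContinuousLinearMap.toLinearMap (hproj k i hi hiℓ), hrange k,
      hker k⟩
  have htrace : ∀ W' : ℕ → Submodule ℝ (Euc d), (∀ i, 1 ≤ i → i ≤ ℓ → W' i ≤ fiberW P k i) →
      traceSpace P ℓ k (⨆ i ∈ Finset.Icc 1 ℓ, W' i) = ⨆ i ∈ Finset.Icc 1 ℓ, W' i :=
    fun W' hW' => hflag.biSup_map_fiber_range_inf_biSup hW'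
  subst hVW
  refine ⟨fun i hi hiℓ => hflag.map_fiber_range_inf_biSup hW hi hiℓ, htrace W hW, fun s => ?_⟩
  ext U
  constructor
  · rintro ⟨⟨W', hW', rfl⟩, rfl⟩
    exact ⟨_, rfl, (htrace W' hW').symm⟩
  · rintro ⟨V', rfl, rfl⟩
    refine ⟨⟨fun i => (range (P k i : Euc d →ₗ[ℝ] Euc d) ⊓ V').map
      (fiberP P k i : Euc d →ₗ[ℝ] Euc d), fun _ _ _ => LinearMap.map_le_range, rfl⟩, ?_⟩
    have hfirst : range (P k 1 : Euc d →ₗ[ℝ] Euc d) ⊓ V' = V' := by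
      rw [hP1 k]
      exact inf_eq_right.mpr fun x _ => ⟨x, rfl⟩
    have hlast : (P k (ℓ + 1) : Euc d →ₗ[ℝ] Euc d) = 0 := by
      rw [hPl k, ContinuousLinearMap.toLinearMap_zero]
    calc finrank ℝ ↥(traceSpace P ℓ k V')
        = finrank ℝ ↥(range (P k 1 : Euc d →ₗ[ℝ] Euc d) ⊓ V') :=
          hflag.finrank_biSup_map_fiber_range_inf hlast V' le_rfl (by omega)
      _ = finrank ℝ V' := by rw [hfirst]

/-- Under the spectral hypotheses, if `V = ⊕_{i=1}^ℓ W_i` with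
`W_i ⊆ 𝒲_k^i`, then `𝒫_{k,i}(Q_{k,i}^s V) = W_i` for every `i` and `𝒯_k(V) = V`;
consequently the set of `s`-dimensional trace spaces at time `k` equals
`{𝒯_k(V) : V ∈ 𝒢(s,d)}`. -/
theorem traceSpace_of_traceSpace
    {d : ℕ} (A : ℕ → (Euc d →L[ℝ] Euc d)) (hA : ∀ n, IsUnit (A n))
    (hbd : ∃ Cb : ℝ, ∀ n, ‖A n‖ + ‖Ring.inverse (A n)‖ ≤ Cb)
    (ℓ : ℕ) (hℓ : 1 ≤ ℓ) (K : ℝ) (hK : 1 ≤ K)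
    (σm σp : ℕ → ℝ)
    (hσ0 : ∀ i, 1 ≤ i → i ≤ ℓ → 0 < σm i)
    (hσ1 : ∀ i, 1 ≤ i → i ≤ ℓ → σm i ≤ σp i)
    (hσ2 : ∀ i, 1 ≤ i → i < ℓ → σp (i + 1) < σm i)
    (P : ℕ → ℕ → (Euc d →L[ℝ] Euc d))
    (hproj : ∀ n i, 1 ≤ i → i ≤ ℓ + 1 → P n i ∘L P n i = P n i)
    (hP1 : ∀ n, P n 1 = 1)
    (hPl : ∀ n, P n (ℓ + 1) = 0)
    (hcomm : ∀ n m i, 1 ≤ i → i ≤ ℓ + 1 → P n i ∘L Phi A n m = Phi A n m ∘L P m i)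
    (hrange : ∀ n i, 1 ≤ i → i ≤ ℓ → LinearMap.range (P n (i + 1) : Euc d →ₗ[ℝ] Euc d) ≤ LinearMap.range (P n i : Euc d →ₗ[ℝ] Euc d))
    (hker : ∀ n i, 1 ≤ i → i ≤ ℓ → LinearMap.ker (P n i : Euc d →ₗ[ℝ] Euc d) ≤ LinearMap.ker (P n (i + 1) : Euc d →ₗ[ℝ] Euc d))
    (hbndS : ∀ i, 1 ≤ i → i ≤ ℓ → ∀ n m : ℕ, m ≤ n →
      ‖Phi A n m ∘L P m (i + 1)‖ ≤ K * (if i = ℓ then (0 : ℝ) else σp (i + 1)) ^ (n - m))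
    (hbndU : ∀ i, 1 ≤ i → i ≤ ℓ → ∀ n m : ℕ, m ≤ n →
      ‖Phi A m n ∘L (1 - P n (i + 1))‖ ≤ K * (σm i ^ (n - m))⁻¹)
    (k : ℕ) (V : Submodule ℝ (Euc d)) (W : ℕ → Submodule ℝ (Euc d))
    (hW : ∀ i, 1 ≤ i → i ≤ ℓ → W i ≤ fiberW P k i)
    (hVW : V = ⨆ i ∈ Finset.Icc 1 ℓ, W i) :
    (∀ i, 1 ≤ i → i ≤ ℓ →
      (LinearMap.range (P k i : Euc d →ₗ[ℝ] Euc d) ⊓ V).map (fiberP P k i : Euc d →ₗ[ℝ] Euc d) = W i) ∧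
    traceSpace P ℓ k V = V ∧
    ∀ s : ℕ,
      {U : Submodule ℝ (Euc d) | IsTraceAt P ℓ k U ∧ Module.finrank ℝ U = s} =
      {U : Submodule ℝ (Euc d) | ∃ V' : Submodule ℝ (Euc d),
        Module.finrank ℝ V' = s ∧ U = traceSpace P ℓ k V'} :=
  traceSpace_of_traceSpace_general ℓ P hproj hP1 hPl hrange hker k V W hW hVW
end
end
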